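/- arXiv:2201.06560 — 2 statements merged into one kernel-verified Lean document; each statement's English description precedes it below -/
import Mathlib

section
/- Fix d ∈ (-1,0). The function f(p1) = (p1 - p1^2 + p1 d)/(1 - p1^2 + p1 d) on the interval (0, 1+d) attains its maximum uniquely at p1 = 1 - sqrt(-d); that is, 1 - sqrt(-d) ∈ (0, 1+d) and for all p1 ∈ (0, 1+d) with p1 ≠ 1 - sqrt(-d), f(p1) < f(1 - sqrt(-d)). -/
theorem horse_TR_linear_max_neg_d (d : ℝ) (hd : d ∈ Set.Ioo (-1:ℝ) 0) :
    (1 - Real.sqrt (-d) ∈ Set.Ioo (0:ℝ) (1 + d)) ∧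
    ∀ p1 ∈ Set.Ioo (0:ℝ) (1 + d), p1 ≠ 1 - Real.sqrt (-d) →
      (p1 - p1 ^ 2 + p1 * d) / (1 - p1 ^ 2 + p1 * d) <
        ((1 - Real.sqrt (-d)) - (1 - Real.sqrt (-d)) ^ 2 + (1 - Real.sqrt (-d)) * d) /
          (1 - (1 - Real.sqrt (-d)) ^ 2 + (1 - Real.sqrt (-d)) * d) := by
  obtain ⟨hd1, hd0⟩ := hd
  set s := Real.sqrt (-d) with hs
  have hs2 : s ^ 2 = -d := by
    rw [hs, sq, Real.mul_self_sqrt (by linarith)]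
  have hs0 : 0 < s := Real.sqrt_pos.mpr (by linarith)
  have hs1 : s < 1 := by nlinarith [hs2]
  have hmem : 1 - s ∈ Set.Ioo (0:ℝ) (1 + d) := by
    constructor
    · linarith
    · nlinarith [hs2]
  refine ⟨hmem, ?_⟩
  rintro p ⟨hp0, hp1⟩ hne
  have hdenp : 0 < 1 - p ^ 2 + p * d := by nlinarith
  have hdens : 0 < 1 - (1 - s) ^ 2 + (1 - s) * d := by nlinarith [hs2]
  rw [div_lt_div_iff₀ hdenp hdens]
  nlinarith [sq_nonneg (p - (1 - s)), sq_pos_of_ne_zero (a := p - (1-s)) (by intro h; apply hne; linarith), hs2]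
end

section
/- Fix r ∈ (0,1). The function f(p1) = (p1 - p1^2/r)/(1 - p1^2/r) on the interval (0, r) attains its maximum uniquely at p1 = 1 - sqrt(1-r); that is, 1 - sqrt(1-r) ∈ (0, r) and for all p1 ∈ (0, r) with p1 ≠ 1 - sqrt(1-r), f(p1) < f(1 - sqrt(1-r)). -/
/-!
Write `s = √(1 - r)` and `q = 1 - s`, so that `q` is the root in `(0, r)` of `q² - 2q + r = 0`.
Completing the square with this relation gives
`f p = q / 2 - r (p - q)² / (2 q (r - p²))`,
and the subtracted term is positive for every `p ∈ (0, r)` other than `q`, since there `p² < r`.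
-/

open Real Set

section Field

variable {K : Type*} [Field K]

/-- `A(p, p / r)`: the chance that Player One scores on their turn under Traditional Rules. -/
def scoreProbRatio (r p : K) : K :=
  (p - p ^ 2 / r) / (1 - p ^ 2 / r)

theorem scoreProbRatio_eq_half_sub {r p q : K}
    (h2 : (2 : K) ≠ 0) (hq : q ^ 2 - 2 * q + r = 0) (hq0 : q ≠ 0) (hr : r ≠ 0)
    (hp : r - p ^ 2 ≠ 0) :
    scoreProbRatio r p = q / 2 - r * (p - q) ^ 2 / (2 * q * (r - p ^ 2)) := by
  have hp' : 1 - p ^ 2 / r ≠ 0 := by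
    rwa [one_sub_div hr, div_ne_zero_iff, and_iff_left hr]
  unfold scoreProbRatio
  field_simp
  linear_combination p ^ 2 * hq

theorem scoreProbRatio_self {r q : K}
    (h2 : (2 : K) ≠ 0) (hq : q ^ 2 - 2 * q + r = 0) (hq0 : q ≠ 0) (hr : r ≠ 0)
    (hqr : r - q ^ 2 ≠ 0) :
    scoreProbRatio r q = q / 2 := by
  simp [scoreProbRatio_eq_half_sub h2 hq hq0 hr hqr]

end Field

theorem scoreProbRatio_lt_half {r p q : ℝ} (hq : q ^ 2 - 2 * q + r = 0) (hq0 : 0 < q)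
    (hr : 0 < r) (hp : p ^ 2 < r) (hpq : p ≠ q) :
    scoreProbRatio r p < q / 2 := by
  rw [scoreProbRatio_eq_half_sub two_ne_zero hq hq0.ne' hr.ne' (sub_pos.2 hp).ne', sub_lt_self_iff]
  have : 0 < (p - q) ^ 2 := sq_pos_of_ne_zero (sub_ne_zero.2 hpq)
  have : 0 < r - p ^ 2 := sub_pos.2 hp
  positivity

theorem one_sub_sqrt_one_sub_sq_sub {r : ℝ} (hr : r ≤ 1) :
    (1 - √(1 - r)) ^ 2 - 2 * (1 - √(1 - r)) + r = 0 := by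
  linear_combination sq_sqrt (sub_nonneg.2 hr)

theorem one_sub_sqrt_one_sub_mem_Ioo {r : ℝ} (hr : r ∈ Ioo (0 : ℝ) 1) :
    1 - √(1 - r) ∈ Ioo 0 r := by
  obtain ⟨hr0, hr1⟩ := hr
  have hs2 : √(1 - r) ^ 2 = 1 - r := sq_sqrt (by linarith)
  have hs1 : √(1 - r) < 1 := (sqrt_lt' one_pos).2 (by linarith)
  have hs0 : 0 < √(1 - r) := sqrt_pos.2 (by linarith)
  exact ⟨by linarith, by nlinarith⟩

theorem sq_lt_of_mem_Ioo {r p : ℝ} (hr : r < 1) (hp : p ∈ Ioo 0 r) : p ^ 2 < r := by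
  obtain ⟨hp0, hpr⟩ := hp
  nlinarith

theorem horse_TR_ratio_max (r : ℝ) (hr : r ∈ Set.Ioo (0:ℝ) 1) :
    (1 - Real.sqrt (1 - r) ∈ Set.Ioo (0:ℝ) r) ∧
    ∀ p1 ∈ Set.Ioo (0:ℝ) r, p1 ≠ 1 - Real.sqrt (1 - r) →
      (p1 - p1 ^ 2 / r) / (1 - p1 ^ 2 / r) <
        ((1 - Real.sqrt (1 - r)) - (1 - Real.sqrt (1 - r)) ^ 2 / r) /
          (1 - (1 - Real.sqrt (1 - r)) ^ 2 / r) := by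
  have hq := one_sub_sqrt_one_sub_mem_Ioo hr
  have hquad := one_sub_sqrt_one_sub_sq_sub hr.2.le
  refine ⟨hq, fun p hp hpq => ?_⟩
  change scoreProbRatio r p < scoreProbRatio r (1 - √(1 - r))
  have hqr : r - (1 - √(1 - r)) ^ 2 ≠ 0 := (sub_pos.2 (sq_lt_of_mem_Ioo hr.2 hq)).ne'
  rw [scoreProbRatio_self two_ne_zero hquad hq.1.ne' hr.1.ne' hqr]
  exact scoreProbRatio_lt_half hquad hq.1 hr.1 (sq_lt_of_mem_Ioo hr.2 hp) hpq
end
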